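/- Let K be a field of characteristic 0, let d ≥ 3 and let n be an integer with 0 ≤ n < d/3. Let R = K[γ₁,…,γ₉, b_{iν} : 1 ≤ i ≤ d+1, ν ∈ Δ] be the polynomial ring over K in the 9 + (d+1)·|Δ| indicated variables. For 1 ≤ i ≤ d+1 let γ(f_i) ∈ R[x,y,z] be the polynomial obtained from f_i = Σ_{ν∈Δ} b_{iν} x^{ν₁}y^{ν₂}z^{ν₃} by substituting x ↦ γ₁x+γ₂y+γ₃z, y ↦ γ₄x+γ₅y+γ₆z, z ↦ γ₇x+γ₈y+γ₉z. Fix an ordering of the d+1 exponent vectors in J(n) and let B_{J(n)} be the (d+1)×(d+1) matrix over R whose (i,j) entry is the coefficient in γ(f_i) of the monomial with the j-th exponent vector of J(n). Then det(B_{J(n)}) is a nonzero element of R. -/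

import Mathlib

open MvPolynomial

/-- The set `Δ` of exponent vectors of degree-`d` monomials in three
variables, as a finset of `Fin 3 → ℕ`. -/
def DeltaF (d : ℕ) : Finset (Fin 3 → ℕ) :=
  (Fintype.piFinset fun _ => Finset.range (d + 1)).filter
    fun ν => ν 0 + ν 1 + ν 2 = d

/-- The index type for the `9 + (d+1)·|Δ|` variables of the ring `R`:
the nine variables `γ₁, …, γ₉` together with the variables `b_{iν}` for
`1 ≤ i ≤ d+1`, `ν ∈ Δ`. -/
def Var (d : ℕ) : Type :=
  Fin 9 ⊕ (Fin (d + 1) × {ν : Fin 3 → ℕ // ν ∈ DeltaF d})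

/-- The image of the `r`-th of the variables `x, y, z` under the generic
coordinate change `γ`; e.g. `x ↦ γ₁x + γ₂y + γ₃z`.  The coefficients are
the variables `γ₁, …, γ₉` of `R`. -/
noncomputable def gammaLin (K : Type*) [CommSemiring K] (d : ℕ) (r : Fin 3) :
    MvPolynomial (Fin 3) (MvPolynomial (Var d) K) :=
  ∑ c : Fin 3,
    C (X (Sum.inl (⟨3 * r.val + c.val, by
      have hr := r.isLt; have hc := c.isLt; omega⟩ : Fin 9))) * X c

/-- `γ(f_i)`, the polynomial obtained from
`f_i = Σ_{ν ∈ Δ} b_{iν} x^{ν₁} y^{ν₂} z^{ν₃}` by substituting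
`x ↦ γ₁x+γ₂y+γ₃z`, `y ↦ γ₄x+γ₅y+γ₆z`, `z ↦ γ₇x+γ₈y+γ₉z`. -/
noncomputable def gammaF (K : Type*) [CommSemiring K] (d : ℕ)
    (i : Fin (d + 1)) : MvPolynomial (Fin 3) (MvPolynomial (Var d) K) :=
  ∑ ν ∈ (DeltaF d).attach,
    C (X (Sum.inr (i, ν))) *
      (gammaLin K d 0 ^ ν.1 0 * gammaLin K d 1 ^ ν.1 1 *
        gammaLin K d 2 ^ ν.1 2)

/-- A fixed ordering of the `d+1` exponent vectors of
`J(n) = {(d−a−1, a, 1) : 0 ≤ a ≤ n−1} ∪ {(d−b, b, 0) : 0 ≤ b ≤ d−n}`: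
first `(d−b, b, 0)` for `b = 0, …, d−n`, then `(d−1−a, a, 1)` for
`a = 0, …, n−1`. -/
def ordJn (d n : ℕ) (j : Fin (d + 1)) : Fin 3 → ℕ :=
  if j.val < d - n + 1 then ![d - j.val, j.val, 0]
  else ![d - 1 - (j.val - (d - n + 1)), j.val - (d - n + 1), 1]

/-! Specialising `γ` to the identity and `b_{iν}` to `[ν = J i]` turns `γ(f_i)` into the
monomial with exponent `J i`, hence `B_J` into the identity matrix. So `det B_J ≠ 0` for any
`d + 1` distinct exponent vectors `J` in `Δ`, in particular for `J(n)`. -/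

lemma ordJn_mem_DeltaF (d n : ℕ) (j : Fin (d + 1)) : ordJn d n j ∈ DeltaF d := by
  have hj := j.isLt
  simp only [DeltaF, Finset.mem_filter, Fintype.mem_piFinset, Finset.mem_range, Fin.forall_fin_succ,
    IsEmpty.forall_iff]
  unfold ordJn
  split_ifs <;> simp only [Matrix.cons_val_zero, Matrix.cons_val_succ, Matrix.cons_val_one,
    Matrix.cons_val_two, Matrix.tail_cons, Matrix.head_cons, and_true] <;> omega

lemma ordJn_injective (d n : ℕ) : Function.Injective (ordJn d n) := by
  intro i j hij
  have h1 := congrFun hij 1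
  have h2 := congrFun hij 2
  have hi := i.isLt
  have hj := j.isLt
  unfold ordJn at h1 h2
  ext
  split_ifs at h1 h2 <;> simp only [Matrix.cons_val_zero, Matrix.cons_val_one,
    Matrix.cons_val_two, Matrix.tail_cons, Matrix.head_cons] at h1 h2 <;> omega

lemma prod_X_pow_fin_three_eq_monomial {R : Type*} [CommSemiring R] (ν : Fin 3 → ℕ) :
    (X 0 : MvPolynomial (Fin 3) R) ^ ν 0 * X 1 ^ ν 1 * X 2 ^ ν 2 =
      monomial (Finsupp.equivFunOnFinite.symm ν) 1 := by
  rw [monomial_eq, C_1, one_mul, Finsupp.prod_fintype _ _ (fun _ => pow_zero _),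
    Fin.prod_univ_three]
  simp

section IdentitySpecialization

variable (K : Type*) [CommSemiring K] {d : ℕ}

/- The bodies of `gammaLin` and `gammaF` type their variables at the unfolded `Var d`, which
blocks rewriting under `map`; these restatements type them at `Var d`. -/
lemma gammaLin_eq_sum (r : Fin 3) :
    gammaLin K d r = ∑ c : Fin 3,
      C (X (R := K) (σ := Var d) (Sum.inl ⟨3 * r.val + c.val, by omega⟩)) * X c :=
  rfl

lemma gammaF_eq_sum (i : Fin (d + 1)) :
    gammaF K d i = ∑ ν ∈ (DeltaF d).attach,
      C (X (R := K) (σ := Var d) (Sum.inr (i, ν))) *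
        (gammaLin K d 0 ^ ν.1 0 * gammaLin K d 1 ^ ν.1 1 * gammaLin K d 2 ^ ν.1 2) :=
  rfl

/-- `γ` goes to the identity matrix (its diagonal entries `γ₁, γ₅, γ₉` have indices `0, 4, 8`)
and `b_{iν}` to `[ν = J i]`. -/
def identitySpec (J : Fin (d + 1) → Fin 3 → ℕ) : Var d → K :=
  Sum.elim (fun g => if g.val % 4 = 0 then 1 else 0) fun p => if p.2.1 = J p.1 then 1 else 0

lemma eval_identitySpec_X_inl (J : Fin (d + 1) → Fin 3 → ℕ) (g : Fin 9) :
    eval (identitySpec K J) (X (Sum.inl g)) = if g.val % 4 = 0 then 1 else 0 :=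
  eval_X _

lemma eval_identitySpec_X_inr (J : Fin (d + 1) → Fin 3 → ℕ)
    (p : Fin (d + 1) × {ν : Fin 3 → ℕ // ν ∈ DeltaF d}) :
    eval (identitySpec K J) (X (Sum.inr p)) = if p.2.1 = J p.1 then 1 else 0 :=
  eval_X _

lemma map_gammaLin_identitySpec (J : Fin (d + 1) → Fin 3 → ℕ) (r : Fin 3) :
    map (eval (identitySpec K J)) (gammaLin K d r) = X r := by
  simp only [gammaLin_eq_sum, Fin.sum_univ_three, map_add, map_mul, MvPolynomial.map_C,
    MvPolynomial.map_X, eval_identitySpec_X_inl]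
  fin_cases r <;> simp

lemma map_gammaF_identitySpec {J : Fin (d + 1) → Fin 3 → ℕ} {i : Fin (d + 1)}
    (hJ : J i ∈ DeltaF d) :
    map (eval (identitySpec K J)) (gammaF K d i) =
      monomial (Finsupp.equivFunOnFinite.symm (J i)) 1 := by
  simp only [gammaF_eq_sum, map_sum, map_mul, map_pow, MvPolynomial.map_C,
    eval_identitySpec_X_inr, map_gammaLin_identitySpec, prod_X_pow_fin_three_eq_monomial]
  rw [Finset.sum_eq_single_of_mem ⟨J i, hJ⟩ (Finset.mem_attach _ _)]
  · simp
  · intro ν _ hν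
    have hν' : ν.1 ≠ J i := fun h => hν (Subtype.ext h)
    simp [hν']

end IdentitySpecialization

theorem det_coeff_gammaF_ne_zero (K : Type*) [CommRing K] [Nontrivial K] {d : ℕ}
    {J : Fin (d + 1) → Fin 3 → ℕ} (hJ : ∀ i, J i ∈ DeltaF d) (hJ_inj : J.Injective) :
    (Matrix.of fun i j : Fin (d + 1) =>
      coeff (Finsupp.equivFunOnFinite.symm (J j)) (gammaF K d i)).det ≠ 0 := by
  set B := Matrix.of fun i j : Fin (d + 1) =>
    coeff (Finsupp.equivFunOnFinite.symm (J j)) (gammaF K d i)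
  have hB : B.map (eval (identitySpec K J)) = 1 := by
    ext i j
    simp [B, Matrix.one_apply, ← coeff_map, map_gammaF_identitySpec K (hJ i), coeff_monomial,
      hJ_inj.eq_iff]
  intro h
  simpa [h, hB] using RingHom.map_det (eval (identitySpec K J)) B

theorem det_BJn_ne_zero_general (K : Type*) [Field K]
    (d n : ℕ) :
    (Matrix.of fun i j : Fin (d + 1) =>
      MvPolynomial.coeff (Finsupp.equivFunOnFinite.symm (ordJn d n j))
        (gammaF K d i)).det ≠ 0 :=
  det_coeff_gammaF_ne_zero K (ordJn_mem_DeltaF d n) (ordJn_injective d n)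

/-- Let `K` be a field of characteristic `0`, `d ≥ 3` and `0 ≤ n < d/3`.
The `(d+1) × (d+1)` matrix `B_{J(n)}` over
`R = K[γ₁,…,γ₉, b_{iν} : 1 ≤ i ≤ d+1, ν ∈ Δ]` whose `(i,j)` entry is the
coefficient in `γ(f_i)` of the monomial with the `j`-th exponent vector of
`J(n)` has nonzero determinant in `R`. -/
theorem det_BJn_ne_zero (K : Type*) [Field K] [CharZero K]
    (d n : ℕ) (hd : 3 ≤ d) (hn : 3 * n < d) :
    (Matrix.of fun i j : Fin (d + 1) =>
      MvPolynomial.coeff (Finsupp.equivFunOnFinite.symm (ordJn d n j))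
        (gammaF K d i)).det ≠ 0 :=
  det_BJn_ne_zero_general K d n
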